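/- arXiv:1505.05465 — 4 statements merged into one kernel-verified Lean document; each statement's English description precedes it below -/
import Mathlib

section
/- For any finite sequence A = (a_1,…,a_n) of positive integers, in the algebra 𝓕₂* one has S_A · S_A = S_{(2a_1, 2a_2, …, 2a_n)}; equivalently, in the overlapping shuffle multiset A·A the sequence (2a_1,…,2a_n) occurs with odd multiplicity and every other sequence occurs with even multiplicity. -/
/-- The overlapping shuffle product of two finite sequences, as a multiset
(counting multiplicities). -/
def osp : List ℕ → List ℕ → Multiset (List ℕ)
  | A, [] => {A}
  | [], B => {B}
  | a :: A, b :: B =>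
      ((osp A (b :: B)).map (a :: ·)) +
      ((osp (a :: A) B).map (b :: ·)) +
      ((osp A B).map ((a + b) :: ·))
termination_by A B => A.length + B.length
decreasing_by all_goals (simp only [List.length_cons]; omega)

/-- The underlying free module over `ZMod 2` on the set of finite sequences
(this carries the mod 2 dual Leibniz--Hopf algebra `𝓕₂*`). -/
abbrev F2D : Type := (List ℕ) →₀ ZMod 2

/-- The basis element `S_I`. -/
noncomputable def sElem (I : List ℕ) : F2D := Finsupp.single I 1

/-- The element of `𝓕₂*` associated to a multiset of sequences, keeping
multiplicities mod 2. -/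
noncomputable def ofMS (m : Multiset (List ℕ)) : F2D := (m.map sElem).sum

/-- The bilinear product of `𝓕₂*`: on basis elements,
`S_I · S_J = Σ_K (multiplicity of K in osp I J mod 2) • S_K`. -/
noncomputable def fmul (x y : F2D) : F2D :=
  x.sum fun I a => y.sum fun J b => (a * b) • ofMS (osp I J)

/-!
In `osp (a :: A) (a :: A)` the two summands starting with a letter `a` are
`osp A (a :: A)` and `osp (a :: A) A`, prefixed by `a`. These coincide because
`osp` is commutative, so they cancel mod 2, and what remains is
`osp A A` prefixed by `2 * a`; induction on `A` finishes the computation.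
-/

theorem osp_comm (A B : List ℕ) : osp A B = osp B A := by
  fun_induction osp A B with
  | case1 A => cases A <;> simp [osp]
  | case2 B => simp [osp]
  | case3 a A b B ih₁ ih₂ ih₃ =>
    rw [osp, ih₁, ih₂, ih₃, Nat.add_comm a b, add_comm ((osp _ _).map _)]

theorem ofMS_add (m n : Multiset (List ℕ)) : ofMS (m + n) = ofMS m + ofMS n := by
  simp only [ofMS, Multiset.map_add, Multiset.sum_add]

theorem ofMS_map_cons (c : ℕ) (m : Multiset (List ℕ)) :
    ofMS (m.map (c :: ·)) = Finsupp.mapDomain (c :: ·) (ofMS m) := by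
  simp only [ofMS, ← Finsupp.mapDomain.addMonoidHom_apply, AddMonoidHom.map_multiset_sum,
    Multiset.map_map]
  congr 2
  funext I
  simp [sElem, Finsupp.mapDomain_single]

theorem ofMS_osp_self (A : List ℕ) :
    ofMS (osp A A) = sElem (A.map (fun a => 2 * a)) := by
  induction A with
  | nil => simp [osp, ofMS]
  | cons a A ih =>
    rw [osp, ofMS_add, ofMS_add, osp_comm A (a :: A), ZModModule.add_self, zero_add,
      ofMS_map_cons, ih]
    simp [sElem, Finsupp.mapDomain_single, two_mul]

theorem fmul_sElem_sElem (I J : List ℕ) : fmul (sElem I) (sElem J) = ofMS (osp I J) := by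
  simp [fmul, sElem, Finsupp.sum_single_index]

theorem sElem_mul_self_general (A : List ℕ) :
    fmul (sElem A) (sElem A) = sElem (A.map (fun a => 2 * a)) := by
  rw [fmul_sElem_sElem, ofMS_osp_self]

/-- For a sequence `A = (a_1,…,a_n)` of positive integers, in `𝓕₂*` one has
`S_A · S_A = S_{(2a_1,…,2a_n)}`. -/
theorem sElem_mul_self (A : List ℕ) (hA : ∀ a ∈ A, 0 < a) :
    fmul (sElem A) (sElem A) = sElem (A.map (fun a => 2 * a)) :=
  sElem_mul_self_general A
end

section
/- Let A = (a_1,…,a_n) and B = (b_1,…,b_m) be finite sequences of positive integers with m ≤ n. Then the sequence (a_1+b_1, …, a_m+b_m, a_{m+1}, …, a_n) occurs in the overlapping shuffle multiset A·B with multiplicity exactly one, and every member K of A·B satisfies K ≥ (a_1+b_1, …, a_m+b_m, a_{m+1}, …, a_n) in the right lexicographic order. -/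
/-- The strict right lexicographic order: longer sequences are greater, and
sequences of equal length are compared at the rightmost entry where they
differ. -/
def rlt (I J : List ℕ) : Prop :=
  I.length < J.length ∨ (I.length = J.length ∧ List.Lex (· < ·) I.reverse J.reverse)

/-
Write `L(A, B)` for `(a_1+b_1, …, a_m+b_m, a_{m+1}, …, a_n)` and induct along the recursion for
`(a :: A)·(b :: B)`. Members `(a+b) :: K` of the third summand are handled by induction, members
`b :: K` of the second are longer than `L`, and members `a :: K` of the first are either longer or
have `K` of length `|A|`, and then `K ≥ L(A, b :: B) > L(A, B)`: the last two agree to the right of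
position `m + 1`, where the former exceeds the latter by the last entry of `b :: B`. So the first two
summands miss `L(a :: A, b :: B)`, which gives the multiplicity one.
-/

def lowestTerm (A B : List ℕ) : List ℕ :=
  List.zipWith (· + ·) A B ++ A.drop B.length

@[simp]
lemma lowestTerm_nil_right (A : List ℕ) : lowestTerm A [] = A := by
  simp [lowestTerm]

@[simp]
lemma lowestTerm_cons_cons (a b : ℕ) (A B : List ℕ) :
    lowestTerm (a :: A) (b :: B) = (a + b) :: lowestTerm A B := by
  simp [lowestTerm]

lemma length_lowestTerm {A B : List ℕ} (h : B.length ≤ A.length) :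
    (lowestTerm A B).length = A.length := by
  simp [lowestTerm]
  omega

lemma osp_nil_right (A : List ℕ) : osp A [] = {A} := by
  rw [osp]

lemma osp_cons_cons (a b : ℕ) (A B : List ℕ) :
    osp (a :: A) (b :: B) =
      (osp A (b :: B)).map (a :: ·) + (osp (a :: A) B).map (b :: ·) +
        (osp A B).map ((a + b) :: ·) := by
  rw [osp]

lemma length_le_of_mem_osp {A B K : List ℕ} (hK : K ∈ osp A B) :
    A.length ≤ K.length ∧ B.length ≤ K.length := by
  induction A, B using osp.induct generalizing K with
  | case1 A => simp_all [osp_nil_right]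
  | case2 B hB =>
    obtain ⟨b, B, rfl⟩ := List.exists_cons_of_ne_nil hB
    simp_all [osp]
  | case3 a A b B ih₁ ih₂ ih₃ =>
    simp only [osp_cons_cons, Multiset.mem_add, Multiset.mem_map] at hK
    rcases hK with (⟨K, hK, rfl⟩ | ⟨K, hK, rfl⟩) | ⟨K, hK, rfl⟩
    · have := ih₁ hK; simp only [List.length_cons] at this ⊢; constructor <;> omega
    · have := ih₂ hK; simp only [List.length_cons] at this ⊢; constructor <;> omega
    · have := ih₃ hK; simp only [List.length_cons] at this ⊢; constructor <;> omega

lemma List.Lex.append_of_length_eq {α : Type*} {r : α → α → Prop} {u v : List α} (s t : List α)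
    (huv : u.length = v.length) (h : List.Lex r u v) : List.Lex r (u ++ s) (v ++ t) := by
  induction h with
  | nil => simp at huv
  | cons _ ih => exact .cons (ih (by simpa using huv))
  | rel hab => exact .rel hab

lemma rlt_trans {I J K : List ℕ} (hIJ : rlt I J) (hJK : rlt J K) : rlt I K := by
  rcases hIJ with hIJ | ⟨eIJ, hIJ⟩ <;> rcases hJK with hJK | ⟨eJK, hJK⟩
  · exact .inl (hIJ.trans hJK)
  · exact .inl (eJK ▸ hIJ)
  · exact .inl (eIJ ▸ hJK)
  · exact .inr ⟨eIJ.trans eJK, List.lt_trans hIJ hJK⟩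

lemma rlt_of_rlt_of_eq_or_rlt {I J K : List ℕ} (hIJ : rlt I J) (hJK : J = K ∨ rlt J K) :
    rlt I K := by
  rcases hJK with rfl | hJK
  exacts [hIJ, rlt_trans hIJ hJK]

lemma rlt_cons_cons (x y : ℕ) {I J : List ℕ} (h : rlt I J) : rlt (x :: I) (y :: J) := by
  rcases h with h | ⟨e, h⟩
  · exact .inl (by simpa using h)
  · exact .inr ⟨by simp [e], by simpa using h.append_of_length_eq [x] [y] (by simp [e])⟩

lemma rlt_cons_of_lt {x y : ℕ} (h : x < y) (L : List ℕ) : rlt (x :: L) (y :: L) :=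
  .inr ⟨rfl, by simpa using List.Lex.append_left _ (List.Lex.rel h) L.reverse⟩

lemma rlt_lowestTerm_of_length_eq_succ :
    ∀ {A B C : List ℕ}, (∀ c ∈ C, 0 < c) → C.length = B.length + 1 → C.length ≤ A.length →
      rlt (lowestTerm A B) (lowestTerm A C)
  | _ :: A, [], [c], hC, _, _ => by
    simpa [lowestTerm] using rlt_cons_of_lt (Nat.lt_add_of_pos_right (hC c (by simp))) A
  | a :: A, b :: B, c :: C, hC, hBC, hCA => by
    simpa using rlt_cons_cons (a + b) (a + c) <|
      rlt_lowestTerm_of_length_eq_succ (fun x hx => hC x (.tail _ hx))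
        (by simpa using hBC) (by simpa using hCA)
  | [], _, _, _, hBC, hCA => by simp at hCA; simp [hCA] at hBC
  | _ :: _, [], [], _, hBC, _ => by simp at hBC
  | _ :: _, [], _ :: _ :: _, _, hBC, _ => by simp at hBC
  | _ :: _, _ :: _, [], _, hBC, _ => by simp at hBC

lemma lowestTerm_eq_or_rlt_of_mem_osp {A B : List ℕ} (hB : ∀ b ∈ B, 0 < b)
    (hlen : B.length ≤ A.length) :
    ∀ K ∈ osp A B, lowestTerm A B = K ∨ rlt (lowestTerm A B) K := by
  induction A, B using osp.induct with
  | case1 A => simp [osp_nil_right]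
  | case2 => simp_all
  | case3 a A b B ih₁ _ ih₃ =>
    have hlen' : B.length ≤ A.length := by simpa using hlen
    have hL := length_lowestTerm hlen'
    intro K hK
    simp only [osp_cons_cons, Multiset.mem_add, Multiset.mem_map] at hK
    rcases hK with (⟨K, hK, rfl⟩ | ⟨K, hK, rfl⟩) | ⟨K, hK, rfl⟩
    · rw [lowestTerm_cons_cons]
      refine .inr (rlt_cons_cons _ _ ?_)
      obtain ⟨hAK, hBK⟩ := length_le_of_mem_osp hK
      rcases hAK.lt_or_eq with hAK | hAK
      · exact .inl (hL ▸ hAK)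
      · have hBA : (b :: B).length ≤ A.length := hAK ▸ hBK
        exact rlt_of_rlt_of_eq_or_rlt
          (rlt_lowestTerm_of_length_eq_succ hB rfl hBA) (ih₁ hB hBA K hK)
    · have := (length_le_of_mem_osp hK).1
      refine .inr (.inl ?_)
      simp only [lowestTerm_cons_cons, List.length_cons, hL] at this ⊢
      omega
    · simpa using (ih₃ (fun x hx => hB x (.tail _ hx)) hlen' K hK).imp_right (rlt_cons_cons _ _)

lemma count_lowestTerm_osp {A B : List ℕ} (hB : ∀ b ∈ B, 0 < b) (hlen : B.length ≤ A.length) :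
    (osp A B).count (lowestTerm A B) = 1 := by
  induction A, B using osp.induct with
  | case1 A => simp [osp_nil_right]
  | case2 => simp_all
  | case3 a A b B _ _ ih =>
    have hlen' : B.length ≤ A.length := by simpa using hlen
    have hb : 0 < b := hB b (by simp)
    have h₁ : lowestTerm (a :: A) (b :: B) ∉ (osp A (b :: B)).map (a :: ·) := by
      simp only [lowestTerm_cons_cons, Multiset.mem_map, List.cons.injEq, not_exists, not_and]
      intro _ _ hab
      omega
    have h₂ : lowestTerm (a :: A) (b :: B) ∉ (osp (a :: A) B).map (b :: ·) := by
      intro hmem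
      obtain ⟨K, hK, hKL⟩ := Multiset.mem_map.mp hmem
      have := congrArg List.length hKL
      have := (length_le_of_mem_osp hK).1
      simp only [lowestTerm_cons_cons, List.length_cons, length_lowestTerm hlen'] at *
      omega
    rw [osp_cons_cons, Multiset.count_add, Multiset.count_add, Multiset.count_eq_zero.mpr h₁,
      Multiset.count_eq_zero.mpr h₂, zero_add, zero_add, lowestTerm_cons_cons,
      Multiset.count_map_eq_count' _ _ (List.cons_injective)]
    exact ih (fun x hx => hB x (.tail _ hx)) hlen'

theorem osp_lowest_term_general (A B : List ℕ) (hB : ∀ b ∈ B, 0 < b)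
    (hlen : B.length ≤ A.length) :
    (osp A B).count (List.zipWith (· + ·) A B ++ A.drop B.length) = 1 ∧
    ∀ K ∈ osp A B,
      List.zipWith (· + ·) A B ++ A.drop B.length = K ∨
      rlt (List.zipWith (· + ·) A B ++ A.drop B.length) K :=
  ⟨count_lowestTerm_osp hB hlen, lowestTerm_eq_or_rlt_of_mem_osp hB hlen⟩

/-- For sequences `A`, `B` of positive integers with `B` no longer than `A`,
the sequence `(a_1+b_1,…,a_m+b_m,a_{m+1},…,a_n)` occurs in the overlapping
shuffle multiset `A·B` with multiplicity exactly one, and every member of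
`A·B` is `≥` it in the right lexicographic order. -/
theorem osp_lowest_term (A B : List ℕ) (hA : ∀ a ∈ A, 0 < a) (hB : ∀ b ∈ B, 0 < b)
    (hlen : B.length ≤ A.length) :
    (osp A B).count (List.zipWith (· + ·) A B ++ A.drop B.length) = 1 ∧
    ∀ K ∈ osp A B,
      List.zipWith (· + ·) A B ++ A.drop B.length = K ∨
      rlt (List.zipWith (· + ·) A B ++ A.drop B.length) K :=
  osp_lowest_term_general A B hB hlen
end

section
/- For all nonempty finite sequences I and I' of positive integers with the same total sum, I' ∈ C(reverse(bar(I))) if and only if reverse(I) ∈ C(bar(I')). (This is the combinatorial content of the identity D ∘ χ_{𝓕₂} = χ_{𝓕₂*} ∘ D relating the conjugations of the mod 2 Leibniz–Hopf algebra and its dual via the duality D(S^I) = S_{bar(I)}.) -/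
/-- The coarsening set `C(I)`: all sequences obtained from `I` by summing
consecutive blocks of entries.  (`C([]) = {[]}` by convention.) -/
def coars : List ℕ → Finset (List ℕ)
  | [] => {[]}
  | [i] => {[i]}
  | i :: j :: rest =>
      ((coars (j :: rest)).image (i :: ·)) ∪
      ((coars (j :: rest)).image (fun I' => (i + I'.headD 0) :: I'.tail))

/-- The set of proper partial sums `{i_1, i_1+i_2, …, i_1+⋯+i_{l−1}}` of a
sequence. -/
def psums (I : List ℕ) : Finset ℕ := (Finset.Ico 1 I.length).image fun k => (I.take k).sum

/-- Successive differences of a list (relative to a starting value). -/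
def diffs : ℕ → List ℕ → List ℕ
  | _, [] => []
  | prev, x :: xs => (x - prev) :: diffs x xs

/-- The bar dual of a sequence `I` with sum `N`: the unique composition of `N`
whose set of proper partial sums is the complement in `{1,…,N−1}` of the set of
proper partial sums of `I`.  It is obtained by taking successive differences of
the elements of that complement (listed increasingly, followed by `N`). -/
def bar (I : List ℕ) : List ℕ :=
  diffs 0 ((((Finset.Ico 1 I.sum) \ psums I).sort (· ≤ ·)) ++ [I.sum])

/-!
For compositions `J`, `K` of the same `N`, `J` is a coarsening of `K` exactly when the proper
partial sums of `J` are among those of `K`. Reversal reflects the partial sums by `s ↦ N - s`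
and `bar` complements them in `{1, …, N - 1}`, so both sides of the equivalence say the same
symmetric thing: no partial sum of `I` and partial sum of `I'` add up to `N`.
-/

open Finset hiding diffs

lemma psums_of_length_le_one {J : List ℕ} (hJ : J.length ≤ 1) : psums J = ∅ := by
  simp [psums, Ico_eq_empty_of_le hJ]

lemma psums_cons (i : ℕ) {J : List ℕ} (hJ : J ≠ []) :
    psums (i :: J) = insert i ((psums J).image (i + ·)) := by
  have hlen : 1 ≤ J.length := List.length_pos_iff.mpr hJ
  ext s
  simp only [psums, mem_image, mem_Ico, mem_insert, List.length_cons]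
  constructor
  · rintro ⟨k, ⟨hk1, hk2⟩, rfl⟩
    obtain ⟨m, rfl⟩ : ∃ m, k = m + 1 := ⟨k - 1, by omega⟩
    rcases Nat.eq_zero_or_pos m with rfl | hm
    · simp
    · exact Or.inr ⟨_, ⟨m, ⟨hm, by omega⟩, rfl⟩, by simp⟩
  · rintro (rfl | ⟨s, ⟨m, ⟨hm1, hm2⟩, rfl⟩, rfl⟩)
    · exact ⟨1, ⟨le_refl _, by omega⟩, by simp⟩
    · exact ⟨m + 1, ⟨by omega, by omega⟩, by simp⟩

lemma head_mem_psums (a : ℕ) {T : List ℕ} (hT : T ≠ []) : a ∈ psums (a :: T) := by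
  simp [psums_cons a hT]

lemma psums_add_head (i h : ℕ) (t : List ℕ) :
    psums ((i + h) :: t) = (psums (h :: t)).image (i + ·) := by
  rcases eq_or_ne t [] with rfl | ht
  · simp [psums_of_length_le_one]
  · rw [psums_cons _ ht, psums_cons _ ht, image_insert, image_image]
    congr 1
    ext s
    simp [add_assoc]

lemma psums_subset_Ico {J : List ℕ} (hJ : ∀ x ∈ J, 0 < x) : psums J ⊆ Ico 1 J.sum := by
  intro s hs
  obtain ⟨k, hk, rfl⟩ := mem_image.1 hs
  rw [mem_Ico] at hk ⊢
  have htake : 0 < (J.take k).sum :=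
    List.sum_pos _ (fun x hx => hJ x (List.mem_of_mem_take hx)) (List.ne_nil_of_length_pos (by simp; omega))
  have hdrop : 0 < (J.drop k).sum :=
    List.sum_pos _ (fun x hx => hJ x (List.mem_of_mem_drop hx)) (by simp; omega)
  have := List.sum_take_add_sum_drop J k
  omega

lemma pos_of_mem_psums {J : List ℕ} (hJ : ∀ x ∈ J, 0 < x) {s : ℕ} (hs : s ∈ psums J) : 0 < s :=
  (mem_Ico.1 (psums_subset_Ico hJ hs)).1

lemma psums_reverse (J : List ℕ) : psums J.reverse = (psums J).image (J.sum - ·) := by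
  ext s
  simp only [psums, List.length_reverse, mem_image, mem_Ico]
  constructor
  · rintro ⟨k, ⟨hk1, hk2⟩, rfl⟩
    refine ⟨_, ⟨J.length - k, ⟨by omega, by omega⟩, rfl⟩, ?_⟩
    rw [List.take_reverse, List.sum_reverse]
    have := List.sum_take_add_sum_drop J (J.length - k)
    omega
  · rintro ⟨t, ⟨m, ⟨hm1, hm2⟩, rfl⟩, rfl⟩
    refine ⟨J.length - m, ⟨by omega, by omega⟩, ?_⟩
    rw [List.take_reverse, List.sum_reverse, Nat.sub_sub_self (by omega)]
    have := List.sum_take_add_sum_drop J m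
    omega

lemma image_add_subset_insert_image_iff (i : ℕ) {A B : Finset ℕ} (hB : ∀ s ∈ B, 0 < s) :
    B.image (i + ·) ⊆ insert i (A.image (i + ·)) ↔ B ⊆ A := by
  refine ⟨fun h s hs => ?_, fun h => (image_subset_image h).trans (subset_insert _ _)⟩
  have hs' := h (mem_image_of_mem _ hs)
  simp only [mem_insert, mem_image] at hs'
  rcases hs' with h0 | ⟨t, ht, hts⟩
  · exact absurd h0 (by have := hB s hs; omega)
  · rwa [show s = t by omega]

lemma of_mem_coars {K J : List ℕ} (hK : ∀ x ∈ K, 0 < x) (hJ : J ∈ coars K) :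
    (∀ x ∈ J, 0 < x) ∧ J.sum = K.sum ∧ psums J ⊆ psums K := by
  induction K using coars.induct generalizing J with
  | case1 => simp_all [coars]
  | case2 i => simp_all [coars]
  | case3 i j rest ih =>
    have hK' : ∀ x ∈ j :: rest, 0 < x := fun x hx => hK x (List.mem_cons_of_mem i hx)
    have hi : 0 < i := hK i List.mem_cons_self
    have hne : ∀ {J'}, J'.sum = (j :: rest).sum → J' ≠ [] := by
      rintro _ hsum rfl
      exact (List.sum_pos _ hK' (List.cons_ne_nil _ _)).ne hsum
    simp only [coars, mem_union, mem_image] at hJ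
    rcases hJ with ⟨J', hJ', rfl⟩ | ⟨J', hJ', rfl⟩
    · obtain ⟨hpos, hsum, hsub⟩ := ih hK' hJ'
      refine ⟨by simp_all, by simp [hsum], ?_⟩
      rw [psums_cons i (hne hsum), psums_cons i (List.cons_ne_nil _ _)]
      exact insert_subset_insert _ (image_subset_image hsub)
    · obtain ⟨hpos, hsum, hsub⟩ := ih hK' hJ'
      obtain ⟨h, t, rfl⟩ := List.exists_cons_of_ne_nil (hne hsum)
      refine ⟨by simp_all, by simp at hsum ⊢; omega, ?_⟩
      rw [List.headD_cons, List.tail_cons, psums_add_head, psums_cons i (List.cons_ne_nil _ _)]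
      exact (image_subset_image hsub).trans (subset_insert _ _)

lemma mem_coars_of_psums_subset {K J : List ℕ} (hK : ∀ x ∈ K, 0 < x) (hJ : ∀ x ∈ J, 0 < x)
    (hsum : J.sum = K.sum) (hsub : psums J ⊆ psums K) : J ∈ coars K := by
  induction K using coars.induct generalizing J with
  | case1 =>
    rcases J with _ | ⟨a, T⟩
    · simp [coars]
    · exact absurd hsum (List.sum_pos _ hJ (List.cons_ne_nil _ _)).ne'
  | case2 i =>
    match J with
    | [] => exact absurd hsum (hK i List.mem_cons_self).ne
    | [a] => simp_all [coars]
    | a :: b :: t =>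
      have := hsub (head_mem_psums a (List.cons_ne_nil b t))
      simp [psums_of_length_le_one] at this
  | case3 i j rest ih =>
    have hK' : ∀ x ∈ j :: rest, 0 < x := fun x hx => hK x (List.mem_cons_of_mem i hx)
    have hK'sum : 0 < (j :: rest).sum := List.sum_pos _ hK' (List.cons_ne_nil _ _)
    obtain ⟨a, T, rfl⟩ := List.exists_cons_of_ne_nil (l := J) (by
      rintro rfl
      exact absurd hsum (List.sum_pos _ hK (List.cons_ne_nil _ _)).ne)
    have hT : ∀ x ∈ T, 0 < x := fun x hx => hJ x (List.mem_cons_of_mem a hx)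
    rw [psums_cons i (List.cons_ne_nil _ _)] at hsub
    simp only [List.sum_cons] at hsum hK'sum
    -- `a` is the total sum or a partial sum of `J`, hence of `i :: j :: rest`; either way `i ≤ a`.
    have hia : i ≤ a := by
      rcases eq_or_ne T [] with rfl | hTne
      · simp at hsum
        omega
      · have := hsub (head_mem_psums a hTne)
        simp only [mem_insert, mem_image] at this
        omega
    simp only [coars, mem_union, mem_image]
    rcases hia.eq_or_lt with rfl | hia
    · left
      have hTne : T ≠ [] := by
        rintro rfl
        simp at hsum
        omega
      rw [psums_cons i hTne, insert_subset_iff] at hsub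
      refine ⟨T, ih hK' hT (by simp; omega) ?_, rfl⟩
      exact (image_add_subset_insert_image_iff i (fun s => pos_of_mem_psums hT)).1 hsub.2
    · right
      have hJ' : ∀ x ∈ (a - i) :: T, 0 < x := by simp_all
      rw [← Nat.add_sub_cancel' hia.le, psums_add_head] at hsub
      refine ⟨(a - i) :: T, ih hK' hJ' (by simp; omega) ?_, by simp; omega⟩
      exact (image_add_subset_insert_image_iff i (fun s => pos_of_mem_psums hJ')).1 hsub

theorem mem_coars_iff {K J : List ℕ} (hK : ∀ x ∈ K, 0 < x) :
    J ∈ coars K ↔ (∀ x ∈ J, 0 < x) ∧ J.sum = K.sum ∧ psums J ⊆ psums K :=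
  ⟨of_mem_coars hK, fun ⟨hJ, hsum, hsub⟩ => mem_coars_of_psums_subset hK hJ hsum hsub⟩

lemma diffs_length (prev : ℕ) (l : List ℕ) : (diffs prev l).length = l.length := by
  induction l generalizing prev with
  | nil => rfl
  | cons x xs ih => simp [diffs, ih]

lemma sum_take_diffs_add {prev : ℕ} {l : List ℕ} (hl : (prev :: l).IsChain (· ≤ ·)) {k : ℕ}
    (hk : k < l.length) : ((diffs prev l).take (k + 1)).sum + prev = l[k] := by
  induction l generalizing prev k with
  | nil => simp at hk
  | cons x xs ih =>
    rw [List.isChain_cons_cons] at hl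
    rcases k with _ | k
    · simp [diffs]
      omega
    · have := ih hl.2 (k := k) (by simpa using hk)
      simp only [diffs, List.take_succ_cons, List.sum_cons, List.getElem_cons_succ] at this ⊢
      omega

lemma diffs_pos {prev : ℕ} {l : List ℕ} (hl : (prev :: l).IsChain (· < ·)) :
    ∀ x ∈ diffs prev l, 0 < x := by
  induction l generalizing prev with
  | nil => simp [diffs]
  | cons y ys ih =>
    rw [List.isChain_cons_cons] at hl
    simp only [diffs, List.mem_cons, forall_eq_or_imp]
    exact ⟨by omega, ih hl.2⟩

lemma psums_diffs_zero {l : List ℕ} (hl : (0 :: l).IsChain (· ≤ ·)) :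
    psums (diffs 0 l) = l.dropLast.toFinset := by
  ext s
  simp only [psums, diffs_length, mem_image, mem_Ico, List.mem_toFinset, List.mem_iff_getElem,
    List.length_dropLast, List.getElem_dropLast]
  constructor
  · rintro ⟨k, ⟨hk1, hk⟩, rfl⟩
    obtain ⟨j, rfl⟩ : ∃ j, k = j + 1 := ⟨k - 1, by omega⟩
    exact ⟨j, by omega, by simpa using (sum_take_diffs_add hl (k := j) (by omega)).symm⟩
  · rintro ⟨j, hj, rfl⟩
    exact ⟨j + 1, ⟨by omega, by omega⟩, by simpa using sum_take_diffs_add hl (k := j) (by omega)⟩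

lemma isChain_zero_sort_append {S : Finset ℕ} {N : ℕ} (hS : S ⊆ Ico 1 N) (hN : 0 < N) :
    (0 :: (S.sort (· ≤ ·) ++ [N])).IsChain (· < ·) := by
  have hmem : ∀ y ∈ S.sort (· ≤ ·), 1 ≤ y ∧ y < N := fun y hy =>
    mem_Ico.1 (hS ((mem_sort _).1 hy))
  refine List.Pairwise.isChain (List.pairwise_cons.2 ⟨?_, ?_⟩)
  · simp only [List.mem_append, List.mem_singleton]
    rintro y (hy | rfl)
    · exact (hmem y hy).1
    · exact hN
  · refine List.pairwise_append.2 ⟨(sortedLT_sort S).pairwise, by simp, ?_⟩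
    simp only [List.mem_singleton]
    rintro a ha _ rfl
    exact (hmem a ha).2

lemma isChain_bar {I : List ℕ} (hN : 0 < I.sum) :
    (0 :: ((Ico 1 I.sum \ psums I).sort (· ≤ ·) ++ [I.sum])).IsChain (· < ·) :=
  isChain_zero_sort_append sdiff_subset hN

lemma bar_pos {I : List ℕ} (hN : 0 < I.sum) : ∀ x ∈ bar I, 0 < x :=
  diffs_pos (isChain_bar hN)

lemma bar_sum {I : List ℕ} (hN : 0 < I.sum) : (bar I).sum = I.sum := by
  have h := sum_take_diffs_add ((isChain_bar hN).imp fun _ _ => le_of_lt)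
    (k := ((Ico 1 I.sum \ psums I).sort (· ≤ ·)).length) (by simp)
  rwa [List.take_of_length_le (by simp [diffs_length]), add_zero, List.getElem_concat_length rfl] at h

lemma psums_bar {I : List ℕ} (hN : 0 < I.sum) : psums (bar I) = Ico 1 I.sum \ psums I := by
  rw [bar, psums_diffs_zero ((isChain_bar hN).imp fun _ _ => le_of_lt)]
  simp

lemma subset_image_sub_sdiff_iff {N : ℕ} {A B : Finset ℕ} (hB : B ⊆ Ico 1 N) :
    B ⊆ (Ico 1 N \ A).image (N - ·) ↔ ∀ a ∈ A, ∀ b ∈ B, a + b ≠ N := by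
  refine ⟨fun h a ha b hb hab => ?_, fun h b hb => ?_⟩
  · obtain ⟨c, hc, hcb⟩ := mem_image.1 (h hb)
    rw [mem_sdiff, mem_Ico] at hc
    exact hc.2 (by rwa [show c = a by omega])
  · have hb' := mem_Ico.1 (hB hb)
    refine mem_image.2 ⟨N - b, mem_sdiff.2 ⟨mem_Ico.2 ⟨by omega, by omega⟩, fun hA => ?_⟩, by omega⟩
    exact h _ hA b hb (by omega)

lemma image_sub_subset_sdiff_iff {N : ℕ} {A B : Finset ℕ} (hA : A ⊆ Ico 1 N) :
    A.image (N - ·) ⊆ Ico 1 N \ B ↔ ∀ a ∈ A, ∀ b ∈ B, a + b ≠ N := by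
  refine ⟨fun h a ha b hb hab => ?_, fun h c hc => ?_⟩
  · have := mem_sdiff.1 (h (mem_image_of_mem _ ha))
    exact this.2 (by rwa [show N - a = b by omega])
  · obtain ⟨a, ha, rfl⟩ := mem_image.1 hc
    have ha' := mem_Ico.1 (hA ha)
    exact mem_sdiff.2 ⟨mem_Ico.2 ⟨by omega, by omega⟩, fun hB => h a ha _ hB (by omega)⟩

theorem duality_conjugation_general (I I' : List ℕ) (hI : I ≠ [])
    (hpos : ∀ i ∈ I, 0 < i) (hpos' : ∀ i ∈ I', 0 < i) (hsum : I.sum = I'.sum) :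
    I' ∈ coars ((bar I).reverse) ↔ I.reverse ∈ coars (bar I') := by
  have hN : 0 < I.sum := List.sum_pos I hpos hI
  have hN' : 0 < I'.sum := hsum ▸ hN
  rw [mem_coars_iff (by simpa using bar_pos hN), mem_coars_iff (bar_pos hN'), psums_reverse,
    psums_reverse, psums_bar hN, psums_bar hN', List.sum_reverse, List.sum_reverse, bar_sum hN,
    bar_sum hN', ← hsum, subset_image_sub_sdiff_iff (hsum ▸ psums_subset_Ico hpos'),
    image_sub_subset_sdiff_iff (psums_subset_Ico hpos)]
  simp only [List.mem_reverse, iff_true_intro hpos, iff_true_intro hpos', true_and]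

/-- The combinatorial content of `D ∘ χ_{𝓕₂} = χ_{𝓕₂*} ∘ D`: for nonempty
sequences `I`, `I'` of positive integers with the same total sum,
`I' ∈ C(reverse (bar I))` iff `reverse I ∈ C(bar I')`. -/
theorem duality_conjugation (I I' : List ℕ) (hI : I ≠ []) (hI' : I' ≠ [])
    (hpos : ∀ i ∈ I, 0 < i) (hpos' : ∀ i ∈ I', 0 < i) (hsum : I.sum = I'.sum) :
    I' ∈ coars ((bar I).reverse) ↔ I.reverse ∈ coars (bar I') :=
  duality_conjugation_general I I' hI hpos hpos' hsum
end

section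
/- Let 𝓕₂ be the free module over ZMod 2 on the set of finite sequences of positive integers, with basis {S^I} and product given by concatenation of sequences, S^I * S^J = S^{I ⌢ J} (the monoid algebra over ZMod 2 of the free monoid on the positive integers). Define χ'(S^I) := Σ_{I' : reverse(I) ∈ C(I')} S^{I'} (a finite sum over all sequences I' of positive integers of which reverse(I) is a coarsening), and χ'(S^{()}) := S^{()}. Then for every nonempty sequence I = (i_1,…,i_n) of positive integers: Σ over all pairs of sequences a, b ∈ ℕ^n with a_j + b_j = i_j for all j, of S^{strip(a)} * χ'(S^{strip(b)}) = 0 in 𝓕₂, where strip deletes all zero entries of a sequence. (That is, χ' is the conjugation/antipode of the mod 2 Leibniz–Hopf algebra, whose coproduct is Δ(S^n) = Σ_{i=0}^{n} S^i ⊗ S^{n−i}.) -/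
/-- The product of the mod 2 Leibniz--Hopf algebra `𝓕₂` (the monoid algebra
over `ZMod 2` of the free monoid on the positive integers): on basis elements,
`S^I * S^J = S^{I ⌢ J}`. -/
noncomputable def cmul (x y : F2D) : F2D :=
  x.sum fun I a => y.sum fun J b => (a * b) • sElem (I ++ J)

/-- The set of compositions of `n`: finite sequences of positive integers with
sum `n`. -/
def comps : ℕ → Finset (List ℕ)
  | 0 => {([] : List ℕ)}
  | n + 1 =>
      (Finset.range (n + 1)).attach.biUnion fun k =>
        (comps k.1).image fun α => (n + 1 - k.1) :: α
termination_by n => n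
decreasing_by
  have h := Finset.mem_range.mp k.2
  omega

/-- The set of refinements of `J`: all sequences of positive integers of which
`J` is a coarsening (each entry of `J` is split into a composition). -/
def refines : List ℕ → Finset (List ℕ)
  | [] => {([] : List ℕ)}
  | j :: rest => ((comps j) ×ˢ (refines rest)).image fun p => p.1 ++ p.2

/-- `χ'(S^I) = Σ_{I' : reverse I ∈ C(I')} S^{I'}` in `𝓕₂`
(with `χ'(S^{()}) = S^{()}`). -/
noncomputable def chiF (I : List ℕ) : F2D := ∑ I' ∈ refines I.reverse, sElem I'

/-- All sequences `a ∈ ℕ^n` with `a_j ≤ i_j` pointwise below `I = (i_1,…,i_n)`. -/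
def subLists : List ℕ → Finset (List ℕ)
  | [] => {([] : List ℕ)}
  | i :: rest => ((Finset.range (i + 1)) ×ˢ subLists rest).image fun p => p.1 :: p.2

/-!
Write `I = J ⌢ (m)` and split the last coordinate as `s + t = m`. Because `χ'` reverses its
argument, `χ'(S^{b ⌢ (t)}) = Σ_c S^c χ'(S^b)` over the compositions `c` of `t`, so for fixed
`a, b` the terms with `s + t = m` add up to `Σ_{s + t = m} Σ_c S^{a ⌢ (s) ⌢ c} χ'(S^b)`.
The `s = 0` part runs over all compositions of `m`, and the `s > 0` part runs over them once
more, indexed by their first part `s`; so each term occurs twice and the sum vanishes mod 2.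
-/

open Finset

theorem comps_zero : comps 0 = {[]} := by rw [comps]

theorem mem_comps : ∀ (n : ℕ) (c : List ℕ), c ∈ comps n ↔ c.sum = n ∧ ∀ x ∈ c, 0 < x
  | 0, c => by
    rcases c with _ | ⟨x, c⟩
    · simp [comps_zero]
    · simp only [comps_zero, mem_singleton, reduceCtorEq, false_iff, List.sum_cons,
        List.mem_cons, forall_eq_or_imp, not_and]
      omega
  | n + 1, c => by
    rw [comps]
    rcases c with _ | ⟨x, c⟩
    · simp
    · simp only [mem_biUnion, mem_attach, mem_image, true_and, Subtype.exists, mem_range,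
        List.cons.injEq, List.sum_cons, List.mem_cons, forall_eq_or_imp]
      constructor
      · rintro ⟨k, hk, c', hc', rfl, rfl⟩
        have := (mem_comps k c').1 hc'
        exact ⟨by omega, by omega, this.2⟩
      · rintro ⟨hsum, hx, hc⟩
        exact ⟨c.sum, by omega, c, (mem_comps _ c).2 ⟨rfl, hc⟩, by omega, rfl⟩

section Compositions

variable {M : Type*} [AddCommMonoid M]

theorem sum_comps_succ (n : ℕ) (g : List ℕ → M) :
    ∑ c ∈ comps (n + 1), g c = ∑ k ∈ range (n + 1), ∑ c ∈ comps (n - k), g ((k + 1) :: c) := by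
  rw [comps, sum_biUnion, sum_attach (range (n + 1))
    (fun k => ∑ c ∈ (comps k).image ((n + 1 - k) :: ·), g c), ← sum_range_reflect]
  · refine sum_congr rfl fun k hk => ?_
    rw [sum_image fun _ _ _ _ h => (List.cons_eq_cons.1 h).2]
    have hk := mem_range.1 hk
    rw [show n + 1 - 1 - k = n - k by omega, show n + 1 - (n - k) = k + 1 by omega]
  · intro k _ l _ hkl
    refine disjoint_left.2 fun c hck hcl => hkl (Subtype.ext ?_)
    obtain ⟨_, _, rfl⟩ := mem_image.1 hck
    obtain ⟨_, _, h⟩ := mem_image.1 hcl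
    have := mem_range.1 k.2
    have := mem_range.1 l.2
    have := (List.cons_eq_cons.1 h).1
    omega

theorem sum_antidiagonal_sum_comps {m : ℕ} (hm : 0 < m) (g : List ℕ → M) :
    ∑ q ∈ antidiagonal m, ∑ c ∈ comps q.2, g ([q.1].filter (· ≠ 0) ++ c) =
      2 • ∑ c ∈ comps m, g c := by
  obtain ⟨n, rfl⟩ := Nat.exists_eq_add_one_of_ne_zero hm.ne'
  rw [Nat.sum_antidiagonal_eq_sum_range_succ_mk, sum_range_succ', two_nsmul]
  congr 1
  rw [sum_comps_succ]
  simp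

end Compositions

theorem mem_refines_nil {K : List ℕ} : K ∈ refines [] ↔ K = [] := by
  simp [refines]

theorem mem_refines_cons {j : ℕ} {J K : List ℕ} :
    K ∈ refines (j :: J) ↔ ∃ c ∈ comps j, ∃ R ∈ refines J, c ++ R = K := by
  simp [refines, and_assoc]

theorem nil_mem_refines_iff {J : List ℕ} (hJ : ∀ j ∈ J, 0 < j) : [] ∈ refines J ↔ J = [] := by
  rcases J with _ | ⟨j, J⟩
  · simp [mem_refines_nil]
  · simp only [mem_refines_cons, List.append_eq_nil_iff, reduceCtorEq, iff_false]
    rintro ⟨c, hc, R, -, rfl, rfl⟩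
    have := hJ j List.mem_cons_self
    simp [mem_comps] at hc
    omega

theorem cons_mem_refines_iff {k : ℕ} {J K : List ℕ} (hk : 0 < k) (hJ : ∀ j ∈ J, 0 < j) :
    k :: K ∈ refines J ↔ (∃ J', J = k :: J' ∧ K ∈ refines J') ∨
      ∃ j J', 0 < j ∧ J = (k + j) :: J' ∧ K ∈ refines (j :: J') := by
  constructor
  · intro h
    rcases J with _ | ⟨j₀, J⟩
    · simp [mem_refines_nil] at h
    obtain ⟨c, hc, R, hR, hcR⟩ := mem_refines_cons.1 h
    rw [mem_comps] at hc
    rcases c with _ | ⟨x, c⟩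
    · have := hJ j₀ List.mem_cons_self
      simp at hc
      omega
    obtain ⟨rfl, rfl⟩ := List.cons_eq_cons.1 hcR
    simp only [List.sum_cons, List.mem_cons, forall_eq_or_imp] at hc
    rcases c with _ | ⟨y, c⟩
    · left
      simp_all
    · right
      refine ⟨(y :: c).sum, J, ?_, ?_, mem_refines_cons.2 ⟨y :: c, ?_, R, hR, rfl⟩⟩
      · simp only [List.sum_cons]
        have := hc.2.2 y List.mem_cons_self
        omega
      · simp [← hc.1]
      · exact (mem_comps _ _).2 ⟨rfl, hc.2.2⟩
  · rintro (⟨J', rfl, hK⟩ | ⟨j, J', -, rfl, hK⟩)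
    · exact mem_refines_cons.2 ⟨[k], (mem_comps _ _).2 (by simpa using hk), K, hK, rfl⟩
    · obtain ⟨c, hc, R, hR, rfl⟩ := mem_refines_cons.1 hK
      rw [mem_comps] at hc
      refine mem_refines_cons.2 ⟨k :: c, (mem_comps _ _).2 ?_, R, hR, rfl⟩
      simpa [hc.1, hk] using hc.2

theorem nil_not_mem_coars {K : List ℕ} (hK : K ≠ []) : [] ∉ coars K := by
  obtain ⟨k, K, rfl⟩ := List.exists_cons_of_ne_nil hK
  cases K <;> simp [coars]

theorem mem_coars_cons {k : ℕ} {J K : List ℕ} (hK : K ≠ []) :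
    J ∈ coars (k :: K) ↔ (∃ J', J = k :: J' ∧ J' ∈ coars K) ∨
      ∃ j J', J = (k + j) :: J' ∧ j :: J' ∈ coars K := by
  obtain ⟨k', K, rfl⟩ := List.exists_cons_of_ne_nil hK
  simp only [coars, mem_union, mem_image]
  constructor
  · rintro (⟨J', hJ', rfl⟩ | ⟨_ | ⟨j, J'⟩, hJ', rfl⟩)
    · exact .inl ⟨J', rfl, hJ'⟩
    · exact absurd hJ' (nil_not_mem_coars hK)
    · exact .inr ⟨j, J', rfl, hJ'⟩
  · rintro (⟨J', rfl, hJ'⟩ | ⟨j, J', rfl, hJ'⟩)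
    · exact .inl ⟨J', hJ', rfl⟩
    · exact .inr ⟨j :: J', hJ', rfl⟩

theorem pos_of_mem_coars : ∀ {J K : List ℕ}, (∀ k ∈ K, 0 < k) → J ∈ coars K → ∀ j ∈ J, 0 < j
  | J, [], _, hJ => by simp_all [coars]
  | J, [k], hK, hJ => by simp_all [coars]
  | J, k :: k' :: K, hK, hJ => by
    simp only [List.mem_cons, forall_eq_or_imp] at hK
    rcases (mem_coars_cons (List.cons_ne_nil k' K)).1 hJ with ⟨J', rfl, hJ'⟩ | ⟨j, J', rfl, hJ'⟩
    · simp only [List.mem_cons, forall_eq_or_imp]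
      exact ⟨hK.1, pos_of_mem_coars (by simpa using hK.2) hJ'⟩
    · have := pos_of_mem_coars (by simpa using hK.2) hJ'
      simp only [List.mem_cons, forall_eq_or_imp] at this ⊢
      exact ⟨by omega, this.2⟩

theorem mem_refines_iff_mem_coars :
    ∀ {J K : List ℕ}, (∀ j ∈ J, 0 < j) → (∀ k ∈ K, 0 < k) → (K ∈ refines J ↔ J ∈ coars K)
  | J, [], hJ, _ => by simp [nil_mem_refines_iff hJ, coars]
  | J, [k], hJ, hK => by
    rw [cons_mem_refines_iff (hK k List.mem_cons_self) hJ]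
    simp only [coars, mem_singleton]
    constructor
    · rintro (⟨J', rfl, hJ'⟩ | ⟨j, J', hj, rfl, hJ'⟩)
      · rw [nil_mem_refines_iff fun j hj => hJ j (List.mem_cons_of_mem k hj)] at hJ'
        rw [hJ']
      · simp only [List.mem_cons, forall_eq_or_imp] at hJ
        simp [nil_mem_refines_iff (J := j :: J') (by simpa [hj] using hJ.2)] at hJ'
    · rintro rfl
      exact .inl ⟨[], rfl, mem_refines_nil.2 rfl⟩
  | J, k :: k' :: K, hJ, hK => by
    have hk := hK k List.mem_cons_self
    have hK' : ∀ x ∈ k' :: K, 0 < x := fun x hx => hK x (List.mem_cons_of_mem k hx)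
    rw [cons_mem_refines_iff hk hJ, mem_coars_cons (List.cons_ne_nil k' K)]
    refine or_congr (exists_congr fun J' => ?_) (exists₂_congr fun j J' => ?_)
    · refine and_congr_right fun hJJ' => mem_refines_iff_mem_coars ?_ hK'
      subst hJJ'
      exact fun j hj => hJ j (List.mem_cons_of_mem k hj)
    · constructor
      · rintro ⟨hj, rfl, hJ'⟩
        refine ⟨rfl, (mem_refines_iff_mem_coars ?_ hK').1 hJ'⟩
        simp only [List.mem_cons, forall_eq_or_imp] at hJ ⊢
        exact ⟨hj, hJ.2⟩
      · rintro ⟨rfl, hJ'⟩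
        exact ⟨(pos_of_mem_coars hK' hJ' j List.mem_cons_self), rfl,
          (mem_refines_iff_mem_coars (pos_of_mem_coars hK' hJ') hK').2 hJ'⟩

theorem eq_nil_of_sum_eq_zero {d : List ℕ} (hd : ∀ x ∈ d, 0 < x) (h : d.sum = 0) : d = [] :=
  List.eq_nil_iff_forall_not_mem.2 fun x hx => (hd x hx).ne' (List.sum_eq_zero_iff.1 h x hx)

theorem eq_of_append_eq_of_sum_eq {c c' R R' : List ℕ} (h : c ++ R = c' ++ R')
    (hsum : c.sum = c'.sum) (hc : ∀ x ∈ c, 0 < x) (hc' : ∀ x ∈ c', 0 < x) : c = c' := by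
  rcases List.append_eq_append_iff.1 h with ⟨d, rfl, -⟩ | ⟨d, rfl, -⟩
  · rw [eq_nil_of_sum_eq_zero (fun x hx => hc' x (List.mem_append_right c hx))
      (by simpa using hsum), List.append_nil]
  · rw [eq_nil_of_sum_eq_zero (fun x hx => hc x (List.mem_append_right c' hx))
      (by simpa using hsum), List.append_nil]

theorem sum_refines_cons {M : Type*} [AddCommMonoid M] (t : ℕ) (J : List ℕ) (f : List ℕ → M) :
    ∑ K ∈ refines (t :: J), f K = ∑ c ∈ comps t, ∑ R ∈ refines J, f (c ++ R) := by
  rw [refines, sum_image, sum_product]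
  rintro ⟨c, R⟩ h ⟨c', R'⟩ h' he
  simp only [coe_product, Set.mem_prod, mem_coe, mem_comps] at h h' he
  obtain rfl := eq_of_append_eq_of_sum_eq he (h.1.1.trans h'.1.1.symm) h.1.2 h'.1.2
  simpa using he

theorem cmul_sElem_left (A : List ℕ) (y : F2D) : cmul (sElem A) y = y.mapDomain (A ++ ·) := by
  unfold cmul sElem
  rw [Finsupp.sum_single_index] <;> simp [Finsupp.mapDomain]

theorem cmul_sElem_sElem (A B : List ℕ) : cmul (sElem A) (sElem B) = sElem (A ++ B) := by
  rw [cmul_sElem_left, sElem, Finsupp.mapDomain_single, sElem]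

theorem cmul_sElem_sum {ι : Type*} (A : List ℕ) (s : Finset ι) (y : ι → F2D) :
    cmul (sElem A) (∑ i ∈ s, y i) = ∑ i ∈ s, cmul (sElem A) (y i) := by
  simp only [cmul_sElem_left, Finsupp.mapDomain_finsetSum]

theorem cmul_sElem_cmul_sElem (A B : List ℕ) (y : F2D) :
    cmul (sElem A) (cmul (sElem B) y) = cmul (sElem (A ++ B)) y := by
  simp only [cmul_sElem_left, ← Finsupp.mapDomain_comp]
  congr 1
  funext K
  simp

theorem chiF_append_filter (B : List ℕ) (t : ℕ) :
    chiF (B ++ [t].filter (· ≠ 0)) = ∑ c ∈ comps t, cmul (sElem c) (chiF B) := by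
  rcases Nat.eq_zero_or_pos t with rfl | ht
  · simp only [List.filter_singleton, ne_eq, not_true_eq_false, decide_false, cond_false,
      List.append_nil, comps_zero, sum_singleton, cmul_sElem_left, List.nil_append]
    exact Finsupp.mapDomain_id.symm
  · simp only [chiF, List.filter_singleton, ht.ne', ne_eq, not_false_eq_true, decide_true,
      cond_true, List.reverse_append, List.reverse_singleton, List.singleton_append,
      sum_refines_cons, cmul_sElem_sum, cmul_sElem_sElem]

theorem sum_antidiagonal_cmul_chiF_eq_zero {m : ℕ} (hm : 0 < m) (a b : List ℕ) :
    ∑ q ∈ antidiagonal m,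
      cmul (sElem ((a ++ [q.1]).filter (· ≠ 0))) (chiF ((b ++ [q.2]).filter (· ≠ 0))) = 0 := by
  simp_rw [List.filter_append, chiF_append_filter, cmul_sElem_sum, cmul_sElem_cmul_sElem,
    List.append_assoc]
  rw [sum_antidiagonal_sum_comps hm
    (fun X => cmul (sElem (a.filter (· ≠ 0) ++ X)) (chiF (b.filter (· ≠ 0))))]
  exact ZModModule.char_nsmul_eq_zero 2 _

section Splittings

def splittings (I : List ℕ) : Finset (List ℕ × List ℕ) :=
  (subLists I ×ˢ subLists I).filter fun p => List.zipWith (· + ·) p.1 p.2 = I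

theorem splittings_nil : splittings [] = {([], [])} := rfl

theorem splittings_cons (i : ℕ) (I : List ℕ) :
    splittings (i :: I) =
      (antidiagonal i ×ˢ splittings I).image fun x => (x.1.1 :: x.2.1, x.1.2 :: x.2.2) := by
  ext ⟨a, b⟩
  simp only [splittings, subLists, mem_filter, mem_product, mem_image,
    HasAntidiagonal.mem_antidiagonal, mem_range, Prod.exists, Prod.mk.injEq]
  constructor
  · rintro ⟨⟨⟨s, a, ⟨hs, ha⟩, rfl⟩, ⟨t, b, ⟨ht, hb⟩, rfl⟩⟩, h⟩
    simp only [List.zipWith_cons_cons, List.cons.injEq] at h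
    exact ⟨s, t, a, b, ⟨h.1, ⟨ha, hb⟩, h.2⟩, rfl, rfl⟩
  · rintro ⟨s, t, a, b, ⟨rfl, ⟨ha, hb⟩, h⟩, rfl, rfl⟩
    exact ⟨⟨⟨s, a, ⟨by omega, ha⟩, rfl⟩, ⟨t, b, ⟨by omega, hb⟩, rfl⟩⟩, by simp [h]⟩

variable {M : Type*} [AddCommMonoid M]

theorem sum_splittings_cons (i : ℕ) (I : List ℕ) (f : List ℕ × List ℕ → M) :
    ∑ p ∈ splittings (i :: I), f p =
      ∑ q ∈ antidiagonal i, ∑ p ∈ splittings I, f (q.1 :: p.1, q.2 :: p.2) := by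
  rw [splittings_cons, sum_image, sum_product]
  intro x _ y _ h
  simp only [Prod.mk.injEq, List.cons.injEq] at h
  ext <;> simp [h]

theorem sum_splittings_append_singleton (I : List ℕ) (m : ℕ) (f : List ℕ × List ℕ → M) :
    ∑ p ∈ splittings (I ++ [m]), f p =
      ∑ p ∈ splittings I, ∑ q ∈ antidiagonal m, f (p.1 ++ [q.1], p.2 ++ [q.2]) := by
  induction I generalizing f with
  | nil => simp [sum_splittings_cons, splittings_nil]
  | cons i I ih => simp only [List.cons_append, sum_splittings_cons, ih]

end Splittings

/-- `χ'(S^I) := Σ_{I' : reverse I ∈ C(I')} S^{I'}` satisfies the defining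
equation of the conjugation (antipode) of the mod 2 Leibniz--Hopf algebra `𝓕₂`
(whose coproduct is `Δ(S^n) = Σ_{i=0}^{n} S^i ⊗ S^{n−i}`): for every nonempty
sequence `I = (i_1,…,i_n)` of positive integers, summing over all pairs
`a, b ∈ ℕ^n` with `a_j + b_j = i_j` for all `j`, one has
`Σ_{(a,b)} S^{strip a} * χ'(S^{strip b}) = 0` in `𝓕₂`, where `strip` deletes
all zero entries.  (The first clause records that `refines J` is indeed the set
of all sequences of positive integers of which `J` is a coarsening.) -/
theorem chiF_antipode (I : List ℕ) (hI : I ≠ []) (hpos : ∀ i ∈ I, 0 < i) :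
    (∀ J K : List ℕ, (∀ j ∈ J, 0 < j) → (∀ k ∈ K, 0 < k) →
      (K ∈ refines J ↔ J ∈ coars K)) ∧
    ∑ p ∈ (subLists I ×ˢ subLists I).filter
        (fun p => List.zipWith (· + ·) p.1 p.2 = I),
      cmul (sElem (p.1.filter (· ≠ 0))) (chiF (p.2.filter (· ≠ 0))) = 0 := by
  refine ⟨fun J K hJ hK => mem_refines_iff_mem_coars hJ hK, ?_⟩
  obtain ⟨J, m, rfl⟩ := (List.eq_nil_or_concat' I).resolve_left hI
  have hm : 0 < m := hpos m (List.mem_append_right J List.mem_cons_self)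
  change ∑ p ∈ splittings (J ++ [m]), _ = 0
  rw [sum_splittings_append_singleton]
  exact sum_eq_zero fun p _ => sum_antidiagonal_cmul_chiF_eq_zero hm p.1 p.2
end
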